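/- Let n_s ≥ 2 and l ≥ 1 be integers with (n_s - 1)·l = n, and let R¹, ..., R^l be pairwise disjoint ordered index sets each of size n_s - 1 partitioning [n]. Define subsets S^i = R^i ∪ {first element of R^{γ(i)}} where γ(i) = 1 + (i mod l). Then the union over i ∈ [l] of the Hamiltonian path edges within each S^i (linking consecutive elements of the ordered set S^i) forms a Hamiltonian cycle on [n]. -/

import Mathlib

/-!
Index the cycle by `ZMod n`, cut into `l` consecutive blocks of length `m = ns - 1`, and put
the `j`-th element of `R^i` at position `m * i + j`. Then the `j`-th element of `S^i` sits at
position `m * i + j` for every `j ≤ m`: for `j = m` because `m * (i + 1) ≡ m * ((i + 1) % l)`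
modulo `n = m * l`. Hence the path edges of `S^i` are exactly the cycle edges leaving the
positions of block `i`, and the blocks cover `ZMod n`.
-/

theorem ZMod.finEquiv_apply {n : ℕ} [NeZero n] (x : Fin n) : ZMod.finEquiv n x = (x : ℕ) := by
  cases n with
  | zero => exact absurd rfl (NeZero.ne 0)
  | succ k => exact (Fin.cast_val_eq_self x).symm

theorem Set.bijOn_univ_of_existsUnique {α β : Type*} {f : α → β} {s : Set β}
    (hf : ∀ a, f a ∈ s) (h : ∀ b ∈ s, ∃! a, f a = b) : Set.BijOn f Set.univ s :=
  ⟨fun a _ => hf a, fun a _ _ _ ha => ((h _ (hf a)).unique rfl ha.symm),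
    fun b hb => (h b hb).exists.imp fun a ha => ⟨Set.mem_univ a, ha⟩⟩

section BlockEquiv

variable {m l n : ℕ} [NeZero n]

def blockEquiv (hn : m * l = n) : Fin l × Fin m ≃ ZMod n :=
  finProdFinEquiv.trans ((finCongr (by rw [mul_comm, hn])).trans (ZMod.finEquiv n).toEquiv)

theorem blockEquiv_apply (hn : m * l = n) (i : Fin l) (j : Fin m) :
    blockEquiv hn (i, j) = ((m * i + j : ℕ) : ZMod n) := by
  simp [blockEquiv, ZMod.finEquiv_apply, add_comm]

theorem natCast_mul_add_eq_blockEquiv_next (hn : m * l = n) (hm : 0 < m) (i : Fin l) :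
    ((m * i + m : ℕ) : ZMod n) =
      blockEquiv hn (⟨(i + 1) % l, Nat.mod_lt _ i.pos⟩, ⟨0, hm⟩) := by
  rw [blockEquiv_apply, ZMod.natCast_eq_natCast_iff', ← hn, add_zero, ← mul_add_one,
    Nat.mul_mod_mul_left, Nat.mul_mod_mul_left, Nat.mod_mod]

theorem exists_block_step_iff {α : Type*} (hn : m * l = n) {c : ZMod n → α} {S : Fin l → ℕ → α}
    (hS : ∀ i j, j ≤ m → S i j = c ((m * i + j : ℕ) : ZMod n)) (P : α → α → Prop) :
    (∃ i j, j < m ∧ P (S i j) (S i (j + 1))) ↔ ∃ t, P (c t) (c (t + 1)) := by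
  rw [← (blockEquiv hn).exists_congr_right]
  simp only [Prod.exists, blockEquiv_apply]
  refine exists_congr fun i => ?_
  simp only [Fin.exists_iff, exists_prop]
  refine exists_congr fun j => and_congr_right fun hj => ?_
  rw [hS i j hj.le, hS i (j + 1) hj, ← add_assoc, Nat.cast_succ]

end BlockEquiv

/-- Let `ns ≥ 2`, `l ≥ 1` with `(ns-1)·l = n`, and let `R¹, …, R^l` be pairwise
disjoint ordered index sets of size `ns-1` partitioning `[n]`. With
`S^i = R^i ∪ {first element of R^{γ(i)}}`, `γ(i) = 1 + (i mod l)`, the union over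
`i ∈ [l]` of the Hamiltonian-path edges linking consecutive elements of each
ordered `S^i` forms a Hamiltonian cycle on `[n]`. -/
theorem stmt_15 (ns l n : ℕ) (hns : 2 ≤ ns) (hl : 1 ≤ l) (hn : (ns - 1) * l = n)
    (R : Fin l → ℕ → ℕ)
    (hmem : ∀ i : Fin l, ∀ j, j < ns - 1 → R i j ∈ Set.Icc 1 n)
    (hpart : ∀ m ∈ Set.Icc 1 n, ∃! p : Fin l × Fin (ns - 1), R p.1 (p.2 : ℕ) = m)
    (S : Fin l → ℕ → ℕ)
    (hS : ∀ i : Fin l,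
      (∀ j, j < ns - 1 → S i j = R i j) ∧
      S i (ns - 1) = R ⟨((i : ℕ) + 1) % l, Nat.mod_lt _ (by omega)⟩ 0)
    (E : ℕ → ℕ → Prop)
    (hE : ∀ a b, E a b ↔ ∃ i : Fin l, ∃ j : ℕ, j + 1 < ns ∧
      ((S i j = a ∧ S i (j + 1) = b) ∨ (S i j = b ∧ S i (j + 1) = a))) :
    ∃ c : ZMod n → ℕ,
      Set.BijOn c Set.univ (Set.Icc 1 n) ∧
      ∀ a b, E a b ↔ ∃ t : ZMod n,
        (c t = a ∧ c (t + 1) = b) ∨ (c t = b ∧ c (t + 1) = a) := by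
  have hm : 0 < ns - 1 := by omega
  have : NeZero n := ⟨by rw [← hn]; positivity⟩
  set e := blockEquiv hn
  let c : ZMod n → ℕ := fun t => R (e.symm t).1 (e.symm t).2
  have hc : ∀ i j, c (e (i, j)) = R i j := by simp [c]
  have hSc : ∀ i j, j ≤ ns - 1 → S i j = c ((ns - 1) * i + j : ℕ) := by
    intro i j hj
    rcases hj.lt_or_eq with hj | rfl
    · rw [(hS i).1 j hj, ← blockEquiv_apply hn i ⟨j, hj⟩, hc]
    · rw [(hS i).2, natCast_mul_add_eq_blockEquiv_next hn hm, hc]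
  refine ⟨c, ?_, fun a b => ?_⟩
  · have hR : Set.BijOn (fun p : Fin l × Fin (ns - 1) => R p.1 p.2) Set.univ (Set.Icc 1 n) :=
      Set.bijOn_univ_of_existsUnique (fun p => hmem _ _ p.2.isLt) hpart
    exact hR.comp (Set.bijOn_univ.2 e.symm.bijective)
  · rw [hE]
    simp only [show ∀ j, j + 1 < ns ↔ j < ns - 1 by omega]
    exact exists_block_step_iff hn hSc fun x y => (x = a ∧ y = b) ∨ (x = b ∧ y = a)
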